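/- For all ρ ∈ (0, 0.9], the unique positive solution w(ρ) of log(cosh(w))/w = ρ satisfies w(ρ) ≤ 8ρ. -/

import Mathlib

/-!
The equation says `log (cosh w) = ρ * w`. Since `cosh w ≥ exp w / 2`, this gives
`w - log 2 ≤ ρ * w`, so `ρ ≤ 0.9` forces `w ≤ 10 log 2 < 7`. On `[-7, 7]` one has
`log (cosh x) ≥ x ^ 2 / 8`: near `0` from `cosh x ≥ 1 + x ^ 2 / 2`, away from `0` from
`cosh x ≥ exp x / 2`. Hence `ρ * w ≥ w ^ 2 / 8`.
-/

namespace Real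

theorem one_add_sq_div_two_le_cosh (x : ℝ) : 1 + x ^ 2 / 2 ≤ cosh x := by
  have hsinh : (|x| / 2) ^ 2 ≤ sinh (|x| / 2) ^ 2 :=
    pow_le_pow_left₀ (by positivity) (self_le_sinh_iff.2 (by positivity)) 2
  have hcosh : cosh x = 1 + 2 * sinh (|x| / 2) ^ 2 := by
    rw [← cosh_abs, ← mul_div_cancel₀ |x| two_ne_zero, cosh_two_mul, cosh_sq]
    ring_nf
  rw [hcosh, ← sq_abs x]
  linarith

theorem sub_log_two_le_log_cosh (x : ℝ) : x - log 2 ≤ log (cosh x) := by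
  rw [le_log_iff_exp_le (cosh_pos x), exp_sub, exp_log two_pos, cosh_eq]
  linarith [exp_pos (-x)]

theorem sq_div_eight_le_log_cosh_of_sq_le_six {x : ℝ} (hx : x ^ 2 ≤ 6) :
    x ^ 2 / 8 ≤ log (cosh x) := by
  have hpos : 0 < 1 + x ^ 2 / 2 := by positivity
  calc x ^ 2 / 8 ≤ 1 - (1 + x ^ 2 / 2)⁻¹ := by
        rw [le_sub_iff_add_le, ← le_sub_iff_add_le', inv_le_iff_one_le_mul₀ hpos]
        nlinarith [sq_nonneg x]
    _ ≤ log (1 + x ^ 2 / 2) := one_sub_inv_le_log_of_pos hpos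
    _ ≤ log (cosh x) := log_le_log hpos (one_add_sq_div_two_le_cosh x)

theorem sq_div_eight_le_log_cosh {x : ℝ} (hx : |x| ≤ 7) : x ^ 2 / 8 ≤ log (cosh x) := by
  rcases le_or_gt (x ^ 2) 6 with hsmall | hlarge
  · exact sq_div_eight_le_log_cosh_of_sq_le_six hsmall
  rw [← sq_abs] at hlarge ⊢
  rw [← cosh_abs]
  have h2 : 2 ≤ |x| := by nlinarith [abs_nonneg x]
  -- `|x| ^ 2 / 8 ≤ |x| - log 2` on `[2, 7]`, as `(|x| - 2) * (7 - |x|) ≥ 0` and `log 2 < 0.7`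
  have hquad : |x| ^ 2 / 8 ≤ |x| - log 2 := by
    nlinarith [mul_nonneg (sub_nonneg.2 h2) (sub_nonneg.2 hx), log_two_lt_d9]
  exact hquad.trans (sub_log_two_le_log_cosh |x|)

end Real

theorem stmt_5 (ρ : ℝ) (hρ : ρ ∈ Set.Ioc (0 : ℝ) 0.9)
    (w : ℝ) (hw : 0 < w) (h : Real.log (Real.cosh w) / w = ρ) :
    w ≤ 8 * ρ := by
  have hlog : Real.log (Real.cosh w) = ρ * w := by
    rw [← h, div_mul_cancel₀ _ hw.ne']
  have hw7 : |w| ≤ 7 := by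
    rw [abs_of_pos hw]
    nlinarith [Real.sub_log_two_le_log_cosh w, Real.log_two_lt_d9, hρ.2]
  have hsq := Real.sq_div_eight_le_log_cosh hw7
  rw [hlog] at hsq
  nlinarith
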